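/- Fix μ_c, μ_h ∈ ℝ and σ_h > 0. For σ_c > 0, let X and Y be independent real-valued random variables with X ~ N(μ_c, σ_c²) and Y ~ N(μ_h, σ_h²). Then P((X − μ_h)² ≥ (Y − μ_h)²) → 1 as σ_c → ∞; that is, for every ε > 0 there exists M > 0 such that for all σ_c ≥ M, P((X − μ_h)² ≥ (Y − μ_h)²) > 1 − ε. -/

import Mathlib

/-!
The event fails only if `|X − μh| < K` or `|Y − μh| > K`. For `K` large the second event is
unlikely because a single law on `ℝ` is tight; for fixed `K` the first has probability at most
`2K / (s √(2π))`, since the density of `N(μc, s²)` is bounded by `1 / (s √(2π))`.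
-/

open MeasureTheory ProbabilityTheory Filter Metric Topology Real
open scoped ENNReal NNReal

lemma tendsto_measure_compl_closedBall {E : Type*} [PseudoMetricSpace E] [CompleteSpace E]
    [SecondCountableTopology E] [MeasurableSpace E] [BorelSpace E]
    (ν : Measure E) [IsFiniteMeasure ν] (c : E) :
    Tendsto (fun r : ℝ ↦ ν (closedBall c r)ᶜ) atTop (𝓝 0) := by
  simpa using tendsto_measure_compl_closedBall_of_isTightMeasureSet isTightMeasureSet_singleton c

lemma gaussianPDFReal_le_inv_sqrt (μ : ℝ) (v : ℝ≥0) (x : ℝ) :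
    gaussianPDFReal μ v x ≤ (√(2 * π * v))⁻¹ := by
  rw [gaussianPDFReal_def]
  refine mul_le_of_le_one_right (by positivity) (Real.exp_le_one_iff.2 ?_)
  exact div_nonpos_of_nonpos_of_nonneg (neg_nonpos.2 (sq_nonneg _)) (by positivity)

lemma gaussianReal_le_mul_volume (μ : ℝ) {v : ℝ≥0} (hv : v ≠ 0) (S : Set ℝ) :
    gaussianReal μ v S ≤ ENNReal.ofReal (√(2 * π * v))⁻¹ * volume S := by
  rw [gaussianReal_apply μ hv, ← setLIntegral_const]
  exact lintegral_mono fun x ↦ ENNReal.ofReal_le_ofReal (gaussianPDFReal_le_inv_sqrt μ v x)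

lemma tendsto_gaussianReal_of_tendsto_var_atTop {ι : Type*} {l : Filter ι} (μ : ℝ)
    {v : ι → ℝ≥0} (hv : Tendsto v l atTop) {S : Set ℝ} (hS : volume S ≠ ∞) :
    Tendsto (fun i ↦ gaussianReal μ (v i) S) l (𝓝 0) := by
  have hsqrt : Tendsto (fun i ↦ √(2 * π * v i)) l atTop :=
    Real.tendsto_sqrt_atTop.comp
      ((NNReal.tendsto_coe_atTop.2 hv).const_mul_atTop (by positivity))
  have hbound : Tendsto (fun i ↦ ENNReal.ofReal (√(2 * π * v i))⁻¹ * volume S) l (𝓝 0) := by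
    simpa using ENNReal.Tendsto.mul_const
      (ENNReal.tendsto_ofReal (tendsto_inv_atTop_zero.comp hsqrt)) (.inr hS)
  refine tendsto_of_tendsto_of_tendsto_of_le_of_le' tendsto_const_nhds hbound
    (.of_forall fun _ ↦ zero_le) ?_
  filter_upwards [hv.eventually_gt_atTop 0] with i hi
  exact gaussianReal_le_mul_volume μ hi.ne' S

lemma setOf_sq_lt_sq_subset {Ω : Type*} (X Y : Ω → ℝ) (c K : ℝ) :
    {ω | (X ω - c) ^ 2 < (Y ω - c) ^ 2} ⊆ X ⁻¹' ball c K ∪ Y ⁻¹' (closedBall c K)ᶜ := by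
  intro ω hω
  by_contra! h
  simp only [Set.mem_union, Set.mem_preimage, mem_ball, Set.mem_compl_iff, mem_closedBall,
    not_or, not_lt, not_not, Real.dist_eq] at h
  exact (sq_lt_sq.1 hω).not_ge (h.2.trans h.1)

section SqLeSq

variable {Ω ι : Type*} [MeasurableSpace Ω] {P : Measure Ω} {l : Filter ι}
  {X : ι → Ω → ℝ} {Y : Ω → ℝ} {c : ℝ}

lemma tendsto_measure_sq_lt_sq [IsFiniteMeasure P] (hY : Measurable Y)
    (hX : ∀ K, Tendsto (fun i ↦ P (X i ⁻¹' ball c K)) l (𝓝 0)) :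
    Tendsto (fun i ↦ P {ω | (X i ω - c) ^ 2 < (Y ω - c) ^ 2}) l (𝓝 0) := by
  refine ENNReal.tendsto_nhds_zero.2 fun ε hε ↦ ?_
  have hY_tail : Tendsto (fun K : ℝ ↦ P (Y ⁻¹' (closedBall c K)ᶜ)) atTop (𝓝 0) := by
    simpa only [Measure.map_apply hY measurableSet_closedBall.compl]
      using tendsto_measure_compl_closedBall (P.map Y) c
  have hε2 : 0 < ε / 2 := ENNReal.half_pos hε.ne'
  obtain ⟨K, hK⟩ := (ENNReal.tendsto_nhds_zero.1 hY_tail (ε / 2) hε2).exists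
  filter_upwards [ENNReal.tendsto_nhds_zero.1 (hX K) (ε / 2) hε2] with i hi
  calc P {ω | (X i ω - c) ^ 2 < (Y ω - c) ^ 2}
      ≤ P (X i ⁻¹' ball c K ∪ Y ⁻¹' (closedBall c K)ᶜ) := measure_mono (setOf_sq_lt_sq_subset ..)
    _ ≤ P (X i ⁻¹' ball c K) + P (Y ⁻¹' (closedBall c K)ᶜ) := measure_union_le _ _
    _ ≤ ε / 2 + ε / 2 := add_le_add hi hK
    _ = ε := ENNReal.add_halves ε

lemma tendsto_measure_sq_le_sq [IsProbabilityMeasure P] (hXm : ∀ᶠ i in l, Measurable (X i))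
    (hY : Measurable Y) (hX : ∀ K, Tendsto (fun i ↦ P (X i ⁻¹' ball c K)) l (𝓝 0)) :
    Tendsto (fun i ↦ P {ω | (Y ω - c) ^ 2 ≤ (X i ω - c) ^ 2}) l (𝓝 1) := by
  have h := ENNReal.Tendsto.sub tendsto_const_nhds (tendsto_measure_sq_lt_sq hY hX)
    (.inl ENNReal.one_ne_top)
  rw [tsub_zero] at h
  refine h.congr' ?_
  filter_upwards [hXm] with i hi
  have hm : MeasurableSet {ω | (X i ω - c) ^ 2 < (Y ω - c) ^ 2} :=
    measurableSet_lt (by fun_prop) (by fun_prop)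
  rw [← prob_compl_eq_one_sub hm]
  simp only [Set.compl_ofPred, not_lt]

end SqLeSq

theorem stmt_4_general
    {Ω : Type*} [MeasurableSpace Ω] (P : Measure Ω) [IsProbabilityMeasure P]
    (μc μh : ℝ)
    (X : ℝ → Ω → ℝ) (Y : Ω → ℝ)
    (hX : ∀ s, 0 < s → Measurable (X s)) (hY : Measurable Y)
    (hXd : ∀ s, 0 < s → P.map (X s) = gaussianReal μc (Real.toNNReal (s ^ 2))) :
    ∀ ε : ℝ≥0∞, 0 < ε → ∃ M : ℝ, 0 < M ∧ ∀ s : ℝ, M ≤ s →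
      1 - ε < P {ω | (Y ω - μh) ^ 2 ≤ (X s ω - μh) ^ 2} := by
  intro ε hε
  have hXm : ∀ᶠ s in atTop, Measurable (X s) := (eventually_gt_atTop 0).mono hX
  have hvar : Tendsto (fun s : ℝ ↦ (s ^ 2).toNNReal) atTop atTop :=
    tendsto_real_toNNReal_atTop.comp (tendsto_pow_atTop two_ne_zero)
  have hfar (K : ℝ) : Tendsto (fun s ↦ P (X s ⁻¹' ball μh K)) atTop (𝓝 0) := by
    refine (tendsto_gaussianReal_of_tendsto_var_atTop μc hvar
      (measure_ball_lt_top (x := μh) (r := K)).ne).congr' ?_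
    filter_upwards [eventually_gt_atTop 0] with s hs
    rw [← hXd s hs, Measure.map_apply (hX s hs) measurableSet_ball]
  have hlt : 1 - ε < 1 := ENNReal.sub_lt_self ENNReal.one_ne_top one_ne_zero hε.ne'
  obtain ⟨M, hM⟩ := eventually_atTop.1
    ((tendsto_measure_sq_le_sq hXm hY hfar).eventually (lt_mem_nhds hlt))
  exact ⟨max M 1, by positivity, fun s hs ↦ hM s (le_of_max_le_left hs)⟩

/-- Theorem 1 (variance-incongruence case, `σc → ∞`): with `X s ~ N(μc, s²)` (the current
data with standard deviation `s`) and `Y ~ N(μh, σh²)` independent for each `s > 0`,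
`P((X s − μh)² ≥ (Y − μh)²) → 1` as `s → ∞`. -/
theorem stmt_4
    {Ω : Type*} [MeasurableSpace Ω] (P : Measure Ω) [IsProbabilityMeasure P]
    (μc μh σh : ℝ) (hσh : 0 < σh)
    (X : ℝ → Ω → ℝ) (Y : Ω → ℝ)
    (hX : ∀ s, 0 < s → Measurable (X s)) (hY : Measurable Y)
    (hind : ∀ s, 0 < s → IndepFun (X s) Y P)
    (hXd : ∀ s, 0 < s → P.map (X s) = gaussianReal μc (Real.toNNReal (s ^ 2)))
    (hYd : P.map Y = gaussianReal μh (Real.toNNReal (σh ^ 2))) :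
    ∀ ε : ℝ≥0∞, 0 < ε → ∃ M : ℝ, 0 < M ∧ ∀ s : ℝ, M ≤ s →
      1 - ε < P {ω | (Y ω - μh) ^ 2 ≤ (X s ω - μh) ^ 2} :=
  stmt_4_general P μc μh X Y hX hY hXd
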